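/- Any optimal solution of the noisy problem min_z ‖Dz‖₁ subject to ‖z_M - y‖_∞ ≤ ε, when the sample set consists of twin samples and includes the boundary indices 1 and n, is 2D sign consistent: between any two consecutive samples, its nonzero curvature signs do not change. -/
import Mathlib


/-- The (n-2)×n second-order difference operator: (Dz)_i = z_i - 2 z_{i+1} + z_{i+2}. -/
def Dmat (n : ℕ) : Matrix (Fin (n - 2)) (Fin n) ℝ :=
  fun i j =>
    if (j : ℕ) = (i : ℕ) then 1
    else if (j : ℕ) = (i : ℕ) + 1 then -2
    else if (j : ℕ) = (i : ℕ) + 2 then 1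
    else 0

/-- Curvature of z at (0-based) position k: z_{k-1} - 2 z_k + z_{k+1}, and 0 at the boundary. -/
noncomputable def curv (n : ℕ) (z : Fin n → ℝ) (k : ℕ) : ℝ :=
  if h : 1 ≤ k ∧ k + 1 < n then
    z ⟨k - 1, by omega⟩ - 2 * z ⟨k, by omega⟩ + z ⟨k + 1, h.2⟩
  else 0

/-- 2D sign consistency w.r.t. a sample set M: between any two consecutive samples,
    either all nonzero curvature signs agree, or all interior curvatures vanish. -/
noncomputable def SignConsistent (n : ℕ) (z : Fin n → ℝ) (M : Finset (Fin n)) : Prop :=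
  ∀ i j : Fin n, i ∈ M → j ∈ M → (i : ℕ) < (j : ℕ) →
    (∀ m : Fin n, m ∈ M → ¬((i : ℕ) < (m : ℕ) ∧ (m : ℕ) < (j : ℕ))) →
    ((∀ k h : ℕ, (i : ℕ) ≤ k → k ≤ (j : ℕ) → (i : ℕ) ≤ h → h ≤ (j : ℕ) →
        curv n z k ≠ 0 → curv n z h ≠ 0 →
        Real.sign (curv n z k) = Real.sign (curv n z h)) ∨
     (∀ k : ℕ, (i : ℕ) < k → k < (j : ℕ) → curv n z k = 0))

lemma curv_eq (n : ℕ) (w : Fin n → ℝ) (k : ℕ) (h1 : 1 ≤ k) (h2 : k + 1 < n) :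
    curv n w k = w ⟨k-1, by omega⟩ - 2 * w ⟨k, by omega⟩ + w ⟨k+1, h2⟩ := by
  rw [curv, dif_pos ⟨h1, h2⟩]

lemma obj_eq (n : ℕ) (w : Fin n → ℝ) :
    ∑ i, |(Dmat n).mulVec w i| = ∑ i : Fin (n-2), |curv n w ((i:ℕ)+1)| := by
  apply Finset.sum_congr rfl
  intro i _
  congr 1
  have hi := i.isLt
  have h2 : (i:ℕ) + 1 + 1 < n := by omega
  rw [curv_eq n w ((i:ℕ)+1) (by omega) h2]
  set j0 : Fin n := ⟨(i:ℕ), by omega⟩ with hj0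
  set j1 : Fin n := ⟨(i:ℕ)+1, by omega⟩ with hj1
  set j2 : Fin n := ⟨(i:ℕ)+2, by omega⟩ with hj2
  have hzero : ∀ x ∈ (Finset.univ : Finset (Fin n)),
      x ∉ ({j0, j1, j2} : Finset (Fin n)) → Dmat n i x * w x = 0 := by
    intro x _ hx
    simp only [Finset.mem_insert, Finset.mem_singleton] at hx
    push_neg at hx
    have hx0 : (x:ℕ) ≠ (i:ℕ) := by
      intro h; exact hx.1 (Fin.ext (by rw [hj0]; exact h))
    have hx1 : (x:ℕ) ≠ (i:ℕ)+1 := by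
      intro h; exact hx.2.1 (Fin.ext (by rw [hj1]; exact h))
    have hx2 : (x:ℕ) ≠ (i:ℕ)+2 := by
      intro h; exact hx.2.2 (Fin.ext (by rw [hj2]; exact h))
    rw [Dmat]
    rw [if_neg hx0, if_neg hx1, if_neg hx2, zero_mul]
  have expand : (Dmat n).mulVec w i = ∑ x ∈ ({j0, j1, j2} : Finset (Fin n)), Dmat n i x * w x := by
    rw [Matrix.mulVec, dotProduct]
    exact (Finset.sum_subset (Finset.subset_univ _) hzero).symm
  rw [expand]
  have hne01 : j0 ≠ j1 := by rw [hj0, hj1]; intro h; have := Fin.mk.inj_iff.mp h; omega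
  have hne02 : j0 ≠ j2 := by rw [hj0, hj2]; intro h; have := Fin.mk.inj_iff.mp h; omega
  have hne12 : j1 ≠ j2 := by rw [hj1, hj2]; intro h; have := Fin.mk.inj_iff.mp h; omega
  rw [Finset.sum_insert (by simp [hne01, hne02]),
      Finset.sum_insert (by simp [hne12]), Finset.sum_singleton]
  have d0 : Dmat n i j0 = 1 := by rw [Dmat, hj0]; simp
  have d1 : Dmat n i j1 = -2 := by
    rw [Dmat, hj1]; simp only [Fin.val_mk]
    rw [if_neg (by omega)]; simp
  have d2 : Dmat n i j2 = 1 := by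
    rw [Dmat, hj2]; simp only [Fin.val_mk]
    rw [if_neg (by omega), if_neg (by omega)]; simp
  rw [d0, d1, d2]
  have he0 : (⟨(i:ℕ)+1-1, by omega⟩ : Fin n) = j0 := by rw [hj0]; exact Fin.ext (by simp)
  rw [he0]
  ring


noncomputable def hatN (a b c : ℕ) (s : ℝ) (l : ℕ) : ℝ :=
  if l ≤ a ∨ c ≤ l then 0
  else if l ≤ b then -s * ((c:ℝ) - (b:ℝ)) * ((l:ℝ) - (a:ℝ))
  else s * ((b:ℝ) - (a:ℝ)) * ((l:ℝ) - (c:ℝ))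

noncomputable def eN (a b c : ℕ) (s : ℝ) (k : ℕ) : ℝ :=
  if k = a then -s * ((c:ℝ) - (b:ℝ))
  else if k = b then s * ((c:ℝ) - (a:ℝ))
  else if k = c then -s * ((b:ℝ) - (a:ℝ))
  else 0

lemma hat_left {a b c : ℕ} {s : ℝ} {l : ℕ} (h : l ≤ a) : hatN a b c s l = 0 := by
  simp [hatN, h]

lemma hat_right {a b c : ℕ} {s : ℝ} {l : ℕ} (h : c ≤ l) : hatN a b c s l = 0 := by
  simp [hatN, h]

lemma hat_seg1 {a b c : ℕ} {s : ℝ} {l : ℕ} (h1 : a ≤ l) (h2 : l ≤ b) (hbc : b < c) :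
    hatN a b c s l = -s * ((c:ℝ) - (b:ℝ)) * ((l:ℝ) - (a:ℝ)) := by
  rcases eq_or_lt_of_le h1 with h | h
  · subst h; rw [hat_left le_rfl]; ring
  · have hc : ¬ (l ≤ a ∨ c ≤ l) := by omega
    rw [hatN, if_neg hc, if_pos h2]

lemma hat_seg2 {a b c : ℕ} {s : ℝ} {l : ℕ} (h1 : b ≤ l) (h2 : l ≤ c) (hab : a < b) :
    hatN a b c s l = s * ((b:ℝ) - (a:ℝ)) * ((l:ℝ) - (c:ℝ)) := by
  rcases eq_or_lt_of_le h2 with h | h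
  · subst h; rw [hat_right le_rfl]; ring
  · rcases eq_or_lt_of_le h1 with h' | h'
    · subst h'
      rw [hat_seg1 hab.le le_rfl (lt_of_le_of_lt h1 h)]; ring
    · have hc : ¬ (l ≤ a ∨ c ≤ l) := by omega
      have hb : ¬ (l ≤ b) := by omega
      rw [hatN, if_neg hc, if_neg hb]



lemma hat_second_diff (a b c : ℕ) (s : ℝ) (ha : 1 ≤ a) (hab : a < b) (hbc : b < c)
    (k : ℕ) (hk : 1 ≤ k) :
    hatN a b c s (k-1) - 2 * hatN a b c s k + hatN a b c s (k+1) = eN a b c s k := by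
  have hk1 : ((k - 1 : ℕ) : ℝ) = (k:ℝ) - 1 := by
    have h1 : (1:ℕ) ≤ k := hk
    push_cast [Nat.cast_sub h1]; ring
  rcases lt_trichotomy k a with h | h | h
  · have e1 : hatN a b c s (k-1) = 0 := hat_left (by omega)
    have e2 : hatN a b c s k = 0 := hat_left (by omega)
    have e3 : hatN a b c s (k+1) = 0 := hat_left (by omega)
    rw [e1, e2, e3, eN, if_neg (by omega), if_neg (by omega), if_neg (by omega)]
    ring
  · have hka : (k:ℝ) = (a:ℝ) := by exact_mod_cast congrArg (Nat.cast : ℕ → ℝ) h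
    have e1 : hatN a b c s (k-1) = 0 := hat_left (by omega)
    have e2 : hatN a b c s k = 0 := hat_left (by omega)
    have e3 : hatN a b c s (k+1) = -s * ((c:ℝ) - (b:ℝ)) * (((k+1:ℕ):ℝ) - (a:ℝ)) :=
      hat_seg1 (by omega) (by omega) hbc
    rw [e1, e2, e3, eN, if_pos h]
    push_cast
    rw [hka]; ring
  · rcases lt_trichotomy k b with h2 | h2 | h2
    · have e1 : hatN a b c s (k-1) = -s * ((c:ℝ) - (b:ℝ)) * (((k-1:ℕ):ℝ) - (a:ℝ)) :=
        hat_seg1 (by omega) (by omega) hbc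
      have e2 : hatN a b c s k = -s * ((c:ℝ) - (b:ℝ)) * ((k:ℝ) - (a:ℝ)) :=
        hat_seg1 (by omega) (by omega) hbc
      have e3 : hatN a b c s (k+1) = -s * ((c:ℝ) - (b:ℝ)) * (((k+1:ℕ):ℝ) - (a:ℝ)) :=
        hat_seg1 (by omega) (by omega) hbc
      rw [e1, e2, e3, eN, if_neg (by omega), if_neg (by omega), if_neg (by omega), hk1]
      push_cast; ring
    · have hkb : (k:ℝ) = (b:ℝ) := by exact_mod_cast congrArg (Nat.cast : ℕ → ℝ) h2
      have e1 : hatN a b c s (k-1) = -s * ((c:ℝ) - (b:ℝ)) * (((k-1:ℕ):ℝ) - (a:ℝ)) :=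
        hat_seg1 (by omega) (by omega) hbc
      have e2 : hatN a b c s k = -s * ((c:ℝ) - (b:ℝ)) * ((k:ℝ) - (a:ℝ)) :=
        hat_seg1 (by omega) (by omega) hbc
      have e3 : hatN a b c s (k+1) = s * ((b:ℝ) - (a:ℝ)) * (((k+1:ℕ):ℝ) - (c:ℝ)) :=
        hat_seg2 (by omega) (by omega) hab
      rw [e1, e2, e3, eN, if_neg (by omega), if_pos h2, hk1]
      push_cast
      rw [hkb]; ring
    · rcases lt_trichotomy k c with h3 | h3 | h3
      · have e1 : hatN a b c s (k-1) = s * ((b:ℝ) - (a:ℝ)) * (((k-1:ℕ):ℝ) - (c:ℝ)) :=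
          hat_seg2 (by omega) (by omega) hab
        have e2 : hatN a b c s k = s * ((b:ℝ) - (a:ℝ)) * ((k:ℝ) - (c:ℝ)) :=
          hat_seg2 (by omega) (by omega) hab
        have e3 : hatN a b c s (k+1) = s * ((b:ℝ) - (a:ℝ)) * (((k+1:ℕ):ℝ) - (c:ℝ)) :=
          hat_seg2 (by omega) (by omega) hab
        rw [e1, e2, e3, eN, if_neg (by omega), if_neg (by omega), if_neg (by omega), hk1]
        push_cast; ring
      · have hkc : (k:ℝ) = (c:ℝ) := by exact_mod_cast congrArg (Nat.cast : ℕ → ℝ) h3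
        have e1 : hatN a b c s (k-1) = s * ((b:ℝ) - (a:ℝ)) * (((k-1:ℕ):ℝ) - (c:ℝ)) :=
          hat_seg2 (by omega) (by omega) hab
        have e2 : hatN a b c s k = 0 := hat_right (by omega)
        have e3 : hatN a b c s (k+1) = 0 := hat_right (by omega)
        rw [e1, e2, e3, eN, if_neg (by omega), if_neg (by omega), if_pos h3, hk1]
        rw [hkc]; ring
      · have e1 : hatN a b c s (k-1) = 0 := hat_right (by omega)
        have e2 : hatN a b c s k = 0 := hat_right (by omega)
        have e3 : hatN a b c s (k+1) = 0 := hat_right (by omega)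
        rw [e1, e2, e3, eN, if_neg (by omega), if_neg (by omega), if_neg (by omega)]
        ring

set_option maxHeartbeats 1000000 in
lemma descent (n : ℕ) (hn : 3 ≤ n) (ε : ℝ) (M : Finset (Fin n)) (y z : Fin n → ℝ)
    (hfeas : ∀ i ∈ M, |z i - y i| ≤ ε)
    (hopt : ∀ w : Fin n → ℝ, (∀ i ∈ M, |w i - y i| ≤ ε) →
      ∑ i, |(Dmat n).mulVec z i| ≤ ∑ i, |(Dmat n).mulVec w i|)
    (a b c : ℕ) (ha : 1 ≤ a) (hab : a < b) (hbc : b < c) (hc : c ≤ n - 2)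
    (hMfree : ∀ (l : ℕ) (hl : l < n), a < l → l < c → (⟨l, hl⟩ : Fin n) ∉ M)
    (s : ℝ)
    (key : |curv n z a + eN a b c s a| + |curv n z b + eN a b c s b| + |curv n z c + eN a b c s c|
         < |curv n z a| + |curv n z b| + |curv n z c|) : False := by
  have hcn : c + 1 < n := by omega
  set z' : Fin n → ℝ := fun l => z l + hatN a b c s (l:ℕ) with hz'
  have hfeas' : ∀ x ∈ M, |z' x - y x| ≤ ε := by
    intro x hx
    have hzero : hatN a b c s (x:ℕ) = 0 := by
      rcases le_or_gt (x:ℕ) a with h | h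
      · exact hat_left h
      rcases le_or_gt c (x:ℕ) with h' | h'
      · exact hat_right h'
      · exact absurd hx (by have := hMfree (x:ℕ) x.isLt h h'; simpa using this)
    rw [hz']
    simp only [hzero, add_zero]
    exact hfeas x hx
  have hle := hopt z' hfeas'
  rw [obj_eq, obj_eq] at hle
  have hpert : ∀ k : ℕ, 1 ≤ k → k + 1 < n → curv n z' k = curv n z k + eN a b c s k := by
    intro k h1 h2
    rw [curv_eq n z' k h1 h2, curv_eq n z k h1 h2, ← hat_second_diff a b c s ha hab hbc k h1]
    simp only [hz']
    ring
  set a' : Fin (n-2) := ⟨a-1, by omega⟩ with ha'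
  set b' : Fin (n-2) := ⟨b-1, by omega⟩ with hb'
  set c' : Fin (n-2) := ⟨c-1, by omega⟩ with hc'
  have hne1 : a' ≠ b' := by rw [ha', hb']; intro hcontra; have := Fin.mk.inj_iff.mp hcontra; omega
  have hne2 : a' ≠ c' := by rw [ha', hc']; intro hcontra; have := Fin.mk.inj_iff.mp hcontra; omega
  have hne3 : b' ≠ c' := by rw [hb', hc']; intro hcontra; have := Fin.mk.inj_iff.mp hcontra; omega
  have va : (a' : ℕ) + 1 = a := by rw [ha']; simp only [Fin.val_mk]; omega
  have vb : (b' : ℕ) + 1 = b := by rw [hb']; simp only [Fin.val_mk]; omega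
  have vc : (c' : ℕ) + 1 = c := by rw [hc']; simp only [Fin.val_mk]; omega
  have hsplit : ∀ w : Fin n → ℝ, ∑ x : Fin (n-2), |curv n w ((x:ℕ)+1)|
      = |curv n w a| + |curv n w b| + |curv n w c|
        + ∑ x ∈ ({a', b', c'} : Finset (Fin (n-2)))ᶜ, |curv n w ((x:ℕ)+1)| := by
    intro w
    rw [← Finset.sum_add_sum_compl ({a', b', c'} : Finset (Fin (n-2)))]
    congr 1
    rw [Finset.sum_insert (by simp [hne1, hne2]), Finset.sum_insert (by simp [hne3]),
      Finset.sum_singleton, va, vb, vc]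
    ring
  have hcompl : ∑ x ∈ ({a', b', c'} : Finset (Fin (n-2)))ᶜ, |curv n z' ((x:ℕ)+1)|
      = ∑ x ∈ ({a', b', c'} : Finset (Fin (n-2)))ᶜ, |curv n z ((x:ℕ)+1)| := by
    apply Finset.sum_congr rfl
    intro x hx
    rw [Finset.mem_compl] at hx
    simp only [Finset.mem_insert, Finset.mem_singleton] at hx
    push_neg at hx
    obtain ⟨hxa, hxb, hxc⟩ := hx
    have hva : (x:ℕ) + 1 ≠ a := by
      intro hcontra; apply hxa; rw [ha']; apply Fin.ext; simp only [Fin.val_mk]; omega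
    have hvb : (x:ℕ) + 1 ≠ b := by
      intro hcontra; apply hxb; rw [hb']; apply Fin.ext; simp only [Fin.val_mk]; omega
    have hvc : (x:ℕ) + 1 ≠ c := by
      intro hcontra; apply hxc; rw [hc']; apply Fin.ext; simp only [Fin.val_mk]; omega
    have hn2 := x.isLt
    rw [hpert ((x:ℕ)+1) (by omega) (by omega)]
    rw [eN, if_neg hva, if_neg hvb, if_neg hvc, add_zero]
  rw [hsplit, hsplit, hcompl] at hle
  rw [hpert a (by omega) (by omega), hpert b (by omega) (by omega),
    hpert c (by omega) (by omega)] at hle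
  linarith [key, hle]
lemma tripleIneqPos (x y w α β γ : ℝ) (hα : 0 < α) (hβ : 0 < β) (hγ : 0 < γ)
    (hsum : γ < α + β) (hx : 0 < x) (hy : y < 0) :
    ∃ s : ℝ, |x + -s*α| + |y + s*β| + |w + -s*γ| < |x| + |y| + |w| := by
  refine ⟨min (x/α) (-y/β), ?_⟩
  set s := min (x/α) (-y/β) with hs
  have hs0 : 0 < s := lt_min (div_pos hx hα) (div_pos (by linarith) hβ)
  have hs1 : s * α ≤ x := by
    have h := min_le_left (x/α) (-y/β)
    have : (x/α) * α = x := by field_simp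
    nlinarith
  have hs2 : s * β ≤ -y := by
    have h := min_le_right (x/α) (-y/β)
    have : (-y/β) * β = -y := by field_simp
    nlinarith
  have e1 : |x + -s*α| = x - s*α := by rw [abs_of_nonneg (by nlinarith)]; ring
  have e2 : |y + s*β| = -y - s*β := by rw [abs_of_nonpos (by nlinarith)]; ring
  have e3 : |w + -s*γ| ≤ |w| + s*γ := by
    calc |w + -s*γ| ≤ |w| + |-s*γ| := abs_add_le _ _
    _ = |w| + s*γ := by rw [abs_of_nonpos (show -s*γ ≤ 0 by nlinarith)]; ring
  rw [e1, e2, abs_of_pos hx, abs_of_neg hy]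
  have hpos : 0 < s * (α + β - γ) := mul_pos hs0 (by linarith)
  nlinarith [e3]

lemma tripleIneq (x y w α β γ : ℝ) (hα : 0 < α) (hβ : 0 < β) (hγ : 0 < γ)
    (hsum : γ < α + β) (hxy : x * y < 0) :
    ∃ s : ℝ, |x + -s*α| + |y + s*β| + |w + -s*γ| < |x| + |y| + |w| := by
  rcases mul_neg_iff.mp hxy with ⟨hx, hy⟩ | ⟨hx, hy⟩
  · exact tripleIneqPos x y w α β γ hα hβ hγ hsum hx hy
  · obtain ⟨s, hkey⟩ := tripleIneqPos (-x) (-y) (-w) α β γ hα hβ hγ hsum (by linarith) (by linarith)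
    refine ⟨-s, ?_⟩
    have e1 : |(-x) + -s*α| = |x + -(-s)*α| := by rw [← abs_neg]; congr 1; ring
    have e2 : |(-y) + s*β| = |y + (-s)*β| := by rw [← abs_neg]; congr 1; ring
    have e3 : |(-w) + -s*γ| = |w + -(-s)*γ| := by rw [← abs_neg]; congr 1; ring
    rw [e1, e2, e3, abs_neg, abs_neg, abs_neg] at hkey
    exact hkey

lemma eN_a (a b c : ℕ) (s : ℝ) : eN a b c s a = -s * ((c:ℝ) - (b:ℝ)) := by
  rw [eN, if_pos rfl]

lemma eN_b (a b c : ℕ) (s : ℝ) (hab : a < b) : eN a b c s b = s * ((c:ℝ) - (a:ℝ)) := by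
  rw [eN, if_neg (by omega), if_pos rfl]

lemma eN_c (a b c : ℕ) (s : ℝ) (hab : a < b) (hbc : b < c) :
    eN a b c s c = -s * ((b:ℝ) - (a:ℝ)) := by
  rw [eN, if_neg (by omega), if_neg (by omega), if_pos rfl]

lemma payR (n : ℕ) (hn : 3 ≤ n) (ε : ℝ) (M : Finset (Fin n)) (y z : Fin n → ℝ)
    (hfeas : ∀ i ∈ M, |z i - y i| ≤ ε)
    (hopt : ∀ w : Fin n → ℝ, (∀ i ∈ M, |w i - y i| ≤ ε) →
      ∑ i, |(Dmat n).mulVec z i| ≤ ∑ i, |(Dmat n).mulVec w i|)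
    (a b c : ℕ) (ha : 1 ≤ a) (hab : a < b) (hbc : b < c) (hc : c ≤ n - 2)
    (hMfree : ∀ (l : ℕ) (hl : l < n), a < l → l < c → (⟨l, hl⟩ : Fin n) ∉ M)
    (hprod : curv n z a * curv n z b < 0) : False := by
  have cab : (a:ℝ) < (b:ℝ) := Nat.cast_lt.mpr hab
  have cbc : (b:ℝ) < (c:ℝ) := Nat.cast_lt.mpr hbc
  obtain ⟨s, hkey⟩ := tripleIneq (curv n z a) (curv n z b) (curv n z c)
    ((c:ℝ)-(b:ℝ)) ((c:ℝ)-(a:ℝ)) ((b:ℝ)-(a:ℝ))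
    (by linarith) (by linarith) (by linarith) (by linarith) hprod
  refine descent n hn ε M y z hfeas hopt a b c ha hab hbc hc hMfree s ?_
  rw [eN_a, eN_b a b c s hab, eN_c a b c s hab hbc]
  exact hkey

lemma payL (n : ℕ) (hn : 3 ≤ n) (ε : ℝ) (M : Finset (Fin n)) (y z : Fin n → ℝ)
    (hfeas : ∀ i ∈ M, |z i - y i| ≤ ε)
    (hopt : ∀ w : Fin n → ℝ, (∀ i ∈ M, |w i - y i| ≤ ε) →
      ∑ i, |(Dmat n).mulVec z i| ≤ ∑ i, |(Dmat n).mulVec w i|)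
    (a b c : ℕ) (ha : 1 ≤ a) (hab : a < b) (hbc : b < c) (hc : c ≤ n - 2)
    (hMfree : ∀ (l : ℕ) (hl : l < n), a < l → l < c → (⟨l, hl⟩ : Fin n) ∉ M)
    (hprod : curv n z b * curv n z c < 0) : False := by
  have cab : (a:ℝ) < (b:ℝ) := Nat.cast_lt.mpr hab
  have cbc : (b:ℝ) < (c:ℝ) := Nat.cast_lt.mpr hbc
  have hprod' : curv n z c * curv n z b < 0 := by rw [mul_comm]; exact hprod
  obtain ⟨s, hkey⟩ := tripleIneq (curv n z c) (curv n z b) (curv n z a)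
    ((b:ℝ)-(a:ℝ)) ((c:ℝ)-(a:ℝ)) ((c:ℝ)-(b:ℝ))
    (by linarith) (by linarith) (by linarith) (by linarith) hprod'
  refine descent n hn ε M y z hfeas hopt a b c ha hab hbc hc hMfree s ?_
  rw [eN_a, eN_b a b c s hab, eN_c a b c s hab hbc]
  linarith [hkey]

lemma sign_prod {x y : ℝ} (hx : x ≠ 0) (hy : y ≠ 0) (h : Real.sign x ≠ Real.sign y) :
    x * y < 0 := by
  rcases hx.lt_or_gt with h1 | h1 <;> rcases hy.lt_or_gt with h2 | h2
  · exact absurd (by rw [Real.sign_of_neg h1, Real.sign_of_neg h2]) h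
  · exact mul_neg_of_neg_of_pos h1 h2
  · exact mul_neg_of_pos_of_neg h1 h2
  · exact absurd (by rw [Real.sign_of_pos h1, Real.sign_of_pos h2]) h

lemma pick_pair {u v w : ℝ} (hu : u ≠ 0) (hvw : v * w < 0) : u * v < 0 ∨ u * w < 0 := by
  rcases mul_neg_iff.mp hvw with ⟨h1, h2⟩ | ⟨h1, h2⟩ <;> rcases hu.lt_or_gt with h | h
  · exact Or.inl (mul_neg_of_neg_of_pos h h1)
  · exact Or.inr (mul_neg_of_pos_of_neg h h2)
  · exact Or.inr (mul_neg_of_neg_of_pos h h2)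
  · exact Or.inl (mul_neg_of_pos_of_neg h h1)

/-- Any optimal solution of the noisy problem min ‖Dz‖₁ s.t. ‖z_M - y‖_∞ ≤ ε, when the
    sample set consists of twin samples and includes the boundary, is 2D sign consistent. -/
theorem stmt17 (n : ℕ) (hn : 3 ≤ n) (ε : ℝ) (hε : 0 < ε)
    (M : Finset (Fin n)) (y : Fin n → ℝ) (z : Fin n → ℝ)
    (hb0 : (⟨0, by omega⟩ : Fin n) ∈ M) (hbn : (⟨n - 1, by omega⟩ : Fin n) ∈ M)
    (htwin : ∀ k ∈ M, (∃ h : (k : ℕ) + 1 < n, (⟨(k : ℕ) + 1, h⟩ : Fin n) ∈ M) ∨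
      (1 ≤ (k : ℕ) ∧ (⟨(k : ℕ) - 1, by have := k.isLt; omega⟩ : Fin n) ∈ M))
    (hfeas : ∀ i ∈ M, |z i - y i| ≤ ε)
    (hopt : ∀ w : Fin n → ℝ, (∀ i ∈ M, |w i - y i| ≤ ε) →
      ∑ i, |(Dmat n).mulVec z i| ≤ ∑ i, |(Dmat n).mulVec w i|) :
    SignConsistent n z M := by
  unfold SignConsistent
  intro i j hiM hjM hij hconsec
  by_cases hflat : ∀ k : ℕ, (i:ℕ) < k → k < (j:ℕ) → curv n z k = 0
  · exact Or.inr hflat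
  · left
    push_neg at hflat
    obtain ⟨m, hm1, hm2, hm0⟩ := hflat
    intro k h hk1 hk2 hh1 hh2 hck hch
    by_contra hsig
    have hkh : curv n z k * curv n z h < 0 := sign_prod hck hch hsig
    have hjlt := j.isLt
    have hij2 : (i:ℕ) + 2 ≤ (j:ℕ) := by omega
    have hi1 : 1 ≤ (i:ℕ) := by
      rcases htwin i hiM with ⟨hlt, hmem⟩ | ⟨h1, _⟩
      · have hcon := hconsec _ hmem
        simp only [Fin.val_mk] at hcon
        omega
      · exact h1
    have hj2 : (j:ℕ) ≤ n - 2 := by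
      rcases htwin j hjM with ⟨hlt, _⟩ | ⟨_, hmem⟩
      · omega
      · have hcon := hconsec _ hmem
        simp only [Fin.val_mk] at hcon
        omega
    have hfree : ∀ (p q : ℕ), (i:ℕ) ≤ p → q ≤ (j:ℕ) →
        ∀ (l : ℕ) (hl : l < n), p < l → l < q → (⟨l, hl⟩ : Fin n) ∉ M := by
      intro p q hp hq l hl h1 h2 hmem
      have hcon := hconsec ⟨l, hl⟩ hmem
      simp only [Fin.val_mk] at hcon
      omega
    have H : ∀ x : ℕ, (i:ℕ) ≤ x → x ≤ (j:ℕ) → curv n z m * curv n z x < 0 → False := by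
      intro x hx1 hx2 hmx
      rcases lt_trichotomy m x with hlt | heq | hlt
      · exact payL n hn ε M y z hfeas hopt (i:ℕ) m x hi1 hm1 hlt (le_trans hx2 hj2)
          (hfree (i:ℕ) x le_rfl hx2) hmx
      · rw [heq] at hmx
        nlinarith [mul_self_nonneg (curv n z x)]
      · have hmx' : curv n z x * curv n z m < 0 := by rw [mul_comm]; exact hmx
        exact payR n hn ε M y z hfeas hopt x m (j:ℕ) (by omega) hlt hm2 hj2
          (hfree x (j:ℕ) hx1 le_rfl) hmx'
    rcases pick_pair hm0 hkh with hc1 | hc1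
    · exact H k hk1 hk2 hc1
    · exact H h hh1 hh2 hc1
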